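/- Suppose the channel quality offsets are generic. Then for every price vector p ∈ ℝ^J with p_j > 0 for all j, the number of undecided users, i.e. the cardinality of { i : the preference set J_i(p) = { j : p_j/c_{ij} = min_{k ∈ {1,…,J}} p_k/c_{ik} } has at least two elements }, is strictly less than J. -/

import Mathlib

/-!
For every undecided user choose two providers it is indifferent between and join them by an
edge. Along a tie `p x / c i x = p y / c i y` the offset ratio `c i x / c i y` equals the price
ratio `p x / p y`, so around a closed chain of ties made by distinct users the offset ratios
multiply to a telescoping product of prices, which is `1`. Genericity forbids this, so distinct
undecided users give distinct edges (chains of length two) and the resulting graph on the `J`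
providers is a forest (longer chains). A forest on `J` vertices has fewer than `J` edges.
-/

/-- The channel quality offsets are generic: no cycle of distinct users and
distinct providers has offset-ratio product equal to one. -/
def Generic {I J : ℕ} (c : Fin I → Fin J → ℝ) : Prop :=
  ∀ (n : ℕ) (_hn : 2 ≤ n) (ii : Fin n → Fin I) (jj : Fin n → Fin J),
    Function.Injective ii → Function.Injective jj →
    ∏ k : Fin n, c (ii k) (jj (k - ⟨1, by omega⟩)) / c (ii k) (jj k) ≠ 1

open SimpleGraph

theorem SimpleGraph.IsAcyclic.ncard_edgeSet_lt {V : Type*} [Finite V] [Nonempty V]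
    {G : SimpleGraph V} (hG : G.IsAcyclic) : G.edgeSet.ncard < Nat.card V := by
  have := Fintype.ofFinite V
  obtain ⟨T, hGT, -, hT⟩ := connected_top.exists_isTree_le_of_le_of_isAcyclic le_top hG
  classical
  calc G.edgeSet.ncard ≤ T.edgeSet.ncard := Set.ncard_le_ncard (edgeSet_mono hGT)
    _ = T.edgeFinset.card := by rw [← coe_edgeFinset, Set.ncard_coe_finset]
    _ < Nat.card V := by rw [Nat.card_eq_fintype_card, ← hT.card_edgeFinset]; omega

theorem Fin.prod_div_comp_sub_eq_one {M : Type*} [CommGroupWithZero M] {n : ℕ} (f : Fin n → M)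
    (hf : ∀ k, f k ≠ 0) (a : Fin n) : ∏ k, f (k - a) / f k = 1 := by
  obtain _ | n := n
  · simp
  rw [Finset.prod_div_distrib,
    Fintype.prod_equiv (Equiv.subRight a) (fun k => f (k - a)) f fun _ => rfl,
    div_self (Finset.prod_ne_zero_iff.mpr fun k _ => hf k)]

section Preferences

variable {I J : ℕ} (c : Fin I → Fin J → ℝ) (p : Fin J → ℝ)

def preferenceSet (i : Fin I) : Set (Fin J) :=
  {j | p j / c i j = ⨅ k : Fin J, p k / c i k}

variable {c p}

theorem div_eq_div_of_mem_preferenceSet (hc : ∀ i j, c i j ≠ 0) (hp : ∀ j, p j ≠ 0)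
    {i : Fin I} {x y : Fin J} (hx : x ∈ preferenceSet c p i) (hy : y ∈ preferenceSet c p i) :
    c i x / c i y = p x / p y := by
  have hxy : p x / c i x = p y / c i y := hx.trans hy.symm
  rw [div_eq_div_iff (hc i x) (hc i y)] at hxy
  rw [div_eq_div_iff (hc i y) (hp y)]
  linarith

theorem Generic.not_forall_mem_preferenceSet (hgen : Generic c) (hc : ∀ i j, c i j ≠ 0)
    (hp : ∀ j, p j ≠ 0) {n : ℕ} (hn : 2 ≤ n) {ii : Fin n → Fin I} {jj : Fin n → Fin J}
    (hii : Function.Injective ii) (hjj : Function.Injective jj) :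
    ¬ ∀ k, jj (k - ⟨1, by omega⟩) ∈ preferenceSet c p (ii k) ∧
      jj k ∈ preferenceSet c p (ii k) := by
  intro hpref
  refine hgen n hn ii jj hii hjj ?_
  calc ∏ k, c (ii k) (jj (k - ⟨1, by omega⟩)) / c (ii k) (jj k)
      = ∏ k, p (jj (k - ⟨1, by omega⟩)) / p (jj k) :=
        Finset.prod_congr rfl fun k _ =>
          div_eq_div_of_mem_preferenceSet hc hp (hpref k).1 (hpref k).2
    _ = 1 := Fin.prod_div_comp_sub_eq_one (fun k => p (jj k)) (fun k => hp _) ⟨1, by omega⟩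

end Preferences

section TieGraph

variable {I J : ℕ} {c : Fin I → Fin J → ℝ} {p : Fin J → ℝ}

theorem Generic.eq_of_mem_preferenceSet (hgen : Generic c) (hc : ∀ i j, c i j ≠ 0)
    (hp : ∀ j, p j ≠ 0) {i i' : Fin I} {x y : Fin J} (hxy : x ≠ y)
    (hx : x ∈ preferenceSet c p i) (hy : y ∈ preferenceSet c p i)
    (hx' : x ∈ preferenceSet c p i') (hy' : y ∈ preferenceSet c p i') : i = i' := by
  by_contra hii
  refine hgen.not_forall_mem_preferenceSet hc hp le_rfl (ii := ![i, i']) (jj := ![x, y])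
    (injective_pair_iff_ne.2 hii) (injective_pair_iff_ne.2 hxy) ?_
  simp [Fin.forall_fin_two, *]

variable {U : Set (Fin I)} {A B : U → Fin J}

theorem Generic.injective_sym2Mk_of_mem_preferenceSet (hgen : Generic c)
    (hc : ∀ i j, c i j ≠ 0) (hp : ∀ j, p j ≠ 0) (hAB : ∀ u, A u ≠ B u)
    (hA : ∀ u : U, A u ∈ preferenceSet c p u) (hB : ∀ u : U, B u ∈ preferenceSet c p u) :
    Function.Injective fun u => s(A u, B u) := by
  intro u u' h
  refine Subtype.ext (hgen.eq_of_mem_preferenceSet hc hp (hAB u) (hA u) (hB u) ?_ ?_)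
  all_goals rcases Sym2.eq_iff.1 h with ⟨h₁, h₂⟩ | ⟨h₁, h₂⟩
  all_goals simp only [h₁, h₂, hA, hB]

theorem Generic.isAcyclic_fromEdgeSet_of_mem_preferenceSet (hgen : Generic c)
    (hc : ∀ i j, c i j ≠ 0) (hp : ∀ j, p j ≠ 0)
    (hA : ∀ u : U, A u ∈ preferenceSet c p u) (hB : ∀ u : U, B u ∈ preferenceSet c p u) :
    (fromEdgeSet (Set.range fun u => s(A u, B u))).IsAcyclic := by
  rw [isAcyclic_iff_free_cycleGraph]
  rintro n hn ⟨f, hf⟩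
  obtain ⟨m, rfl⟩ : ∃ m, n = m + 3 := ⟨n - 3, by omega⟩
  have hedge : ∀ k : Fin (m + 3), ∃ u : U, s(A u, B u) = s(f (k - 1), f k) := fun k =>
    (f.map_rel (show (cycleGraph (m + 3)).Adj (k - 1) k by simp [cycleGraph_adj])).1
  choose ii hii using hedge
  have hmem : ∀ u, ∀ j ∈ s(A u, B u), j ∈ preferenceSet c p u := by
    rintro u j hj
    rcases Sym2.mem_iff.1 hj with rfl | rfl
    exacts [hA u, hB u]
  refine hgen.not_forall_mem_preferenceSet hc hp (by omega) (ii := fun k => ii k) (jj := f)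
    (Subtype.val_injective.comp ?_) hf fun k =>
      ⟨hmem _ _ (by rw [hii k]; exact Sym2.mem_mk_left _ _),
        hmem _ _ (by rw [hii k]; exact Sym2.mem_mk_right _ _)⟩
  intro k l hkl
  rcases Sym2.eq_iff.1 ((hii k).symm.trans (hkl ▸ hii l)) with ⟨-, h⟩ | ⟨h₁, h₂⟩
  · exact hf h
  · -- a 2-cycle `k - 1 = l`, `l - 1 = k` is impossible in `Fin n` for `n ≥ 3`
    have h : k - 1 - 1 = k := by rw [hf h₁, hf h₂.symm]
    rw [sub_sub, sub_eq_self] at h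
    simp [Fin.ext_iff, Fin.val_add, Nat.mod_eq_of_lt (by omega : 2 < m + 3)] at h

end TieGraph

theorem number_of_undecided_users_lt_providers_general
    (I J : ℕ) (hJ : 0 < J)
    (c : Fin I → Fin J → ℝ) (hc : ∀ i j, 0 < c i j)
    (hgen : Generic c)
    (p : Fin J → ℝ) (hp : ∀ j, 0 < p j) :
    Set.ncard {i : Fin I |
      1 < Set.ncard {j : Fin J | p j / c i j = ⨅ k : Fin J, p k / c i k}} < J := by
  have : Nonempty (Fin J) := ⟨⟨0, hJ⟩⟩
  have hc' : ∀ i j, c i j ≠ 0 := fun i j => (hc i j).ne'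
  have hp' : ∀ j, p j ≠ 0 := fun j => (hp j).ne'
  let U : Set (Fin I) := {i | 1 < (preferenceSet c p i).ncard}
  choose A B hA hB hAB using fun u : U => (Set.one_lt_ncard_iff (Set.toFinite _)).1 u.2
  let tieEdges := Set.range fun u => s(A u, B u)
  calc U.ncard = tieEdges.ncard := by
        rw [Set.ncard_range_of_injective
          (hgen.injective_sym2Mk_of_mem_preferenceSet hc' hp' hAB hA hB), Nat.card_coe_set_eq]
    _ = (fromEdgeSet tieEdges).edgeSet.ncard := by
        rw [edgeSet_fromEdgeSet, sdiff_eq_left.2]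
        exact Set.disjoint_left.2 fun _ ⟨u, hu⟩ => hu ▸ Sym2.mk_isDiag_iff.not.2 (hAB u)
    _ < Nat.card (Fin J) :=
        (hgen.isAcyclic_fromEdgeSet_of_mem_preferenceSet hc' hp' hA hB).ncard_edgeSet_lt
    _ = J := Nat.card_fin J

/-- If the channel quality offsets are generic, then for
every positive price vector `p` the number of undecided users (those whose
preference set has at least two elements) is strictly less than `J`. -/
theorem number_of_undecided_users_lt_providers
    (I J : ℕ) (hI : 0 < I) (hJ : 0 < J)
    (c : Fin I → Fin J → ℝ) (hc : ∀ i j, 0 < c i j)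
    (hgen : Generic c)
    (p : Fin J → ℝ) (hp : ∀ j, 0 < p j) :
    Set.ncard {i : Fin I |
      1 < Set.ncard {j : Fin J | p j / c i j = ⨅ k : Fin J, p k / c i k}} < J :=
  number_of_undecided_users_lt_providers_general I J hJ c hc hgen p hp
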